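/- Let M = (A,B,C,D) be a discrete-time system, T ∈ ℂ^{n×n} invertible, X := TᴴT, and ξ ∈ [0,1). Suppose W̃(X,M) − ξ·diag(X, X, 2I_m) ≥ 0. Then the I-passivity radius of the normalized realization M_T := (TAT⁻¹, TB, CT⁻¹, D) is at least ξ: every Δ ∈ ℂ^{(n+m)×(n+m)} for which Ŵ(Iₙ, M_T) + E₁ΔE₂ᴴ + E₂ΔᴴE₁ᴴ is singular satisfies ‖Δ‖₂ ≥ ξ. -/

import Mathlib

open Matrix
open scoped ComplexOrder

/-- The spectral norm (largest singular value) of a complex matrix. -/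
noncomputable def spNorm {k l : Type*} [Fintype k] [Fintype l] [DecidableEq k] [DecidableEq l]
    (A : Matrix k l ℂ) : ℝ :=
  ‖(Matrix.toEuclideanLin A).toContinuousLinearMap‖

/-- The matrix `W̃(X,M) = [[X, XA, XB],[AᴴX, X, Cᴴ],[BᴴX, C, Dᴴ + D]]`. -/
noncomputable def Wtil {n m : ℕ} (X A : Matrix (Fin n) (Fin n) ℂ)
    (B : Matrix (Fin n) (Fin m) ℂ) (C : Matrix (Fin m) (Fin n) ℂ)
    (D : Matrix (Fin m) (Fin m) ℂ) :
    Matrix (Fin n ⊕ (Fin n ⊕ Fin m)) (Fin n ⊕ (Fin n ⊕ Fin m)) ℂ :=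
  fromBlocks X (fromCols (X * A) (X * B)) (fromRows (Aᴴ * X) (Bᴴ * X))
    (fromBlocks X Cᴴ C (Dᴴ + D))

/-- `diag(X, X, 2·I_m)`. -/
noncomputable def diagXX2 {n : ℕ} (m : ℕ) (X : Matrix (Fin n) (Fin n) ℂ) :
    Matrix (Fin n ⊕ (Fin n ⊕ Fin m)) (Fin n ⊕ (Fin n ⊕ Fin m)) ℂ :=
  fromBlocks X 0 0 (fromBlocks X 0 0 ((2 : ℂ) • 1))

/-- `E₁ = [[I,0],[0,0],[0,I]]`. -/
noncomputable def Emat1 (n m : ℕ) : Matrix (Fin n ⊕ (Fin n ⊕ Fin m)) (Fin n ⊕ Fin m) ℂ :=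
  fromBlocks 1 0 (fromRows 0 0) (fromRows 0 1)

/-- `E₂ = [[0,0],[I,0],[0,I]]`. -/
noncomputable def Emat2 (n m : ℕ) : Matrix (Fin n ⊕ (Fin n ⊕ Fin m)) (Fin n ⊕ Fin m) ℂ :=
  fromBlocks 0 0 (fromRows 1 0) (fromRows 0 1)

/-!
Congruence with `diag(T⁻¹, T⁻¹, I)` turns the LMI into `W̃(I, M_T) - ξ·diag(I, I, 2I) ≥ 0`, and
`diag(I, I, 2I) = E₁E₁ᴴ + E₂E₂ᴴ`. If `‖Δ‖₂ < ξ`, then `ξ(E₁E₁ᴴ + E₂E₂ᴴ) + E₁ΔE₂ᴴ + E₂ΔᴴE₁ᴴ` is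
positive definite: with `u = E₁ᴴx`, `v = E₂ᴴx` its quadratic form is
`ξ(‖u‖² + ‖v‖²) + 2 Re⟨u, Δv⟩ ≥ (ξ - ‖Δ‖₂)(‖u‖² + ‖v‖²)`, and `u`, `v` together determine `x`.
So the perturbed `Ŵ(I, M_T)` is positive semidefinite plus positive definite, hence nonsingular.
-/

section PerturbedQuadraticForm

variable {ι κ μ : Type*} [Fintype ι] [Fintype κ] [Fintype μ]

lemma star_dotProduct_mul_conjTranspose_mulVec (E F : Matrix ι κ ℂ) (x : ι → ℂ) :
    star x ⬝ᵥ ((E * Fᴴ) *ᵥ x) = star (Eᴴ *ᵥ x) ⬝ᵥ (Fᴴ *ᵥ x) := by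
  rw [← mulVec_mulVec, dotProduct_mulVec, star_mulVec, conjTranspose_conjTranspose]

lemma star_dotProduct_mul_mul_conjTranspose_mulVec (E : Matrix ι κ ℂ) (Δ : Matrix κ μ ℂ)
    (F : Matrix ι μ ℂ) (x : ι → ℂ) :
    star x ⬝ᵥ ((E * Δ * Fᴴ) *ᵥ x) = star (Eᴴ *ᵥ x) ⬝ᵥ (Δ *ᵥ (Fᴴ *ᵥ x)) := by
  rw [← mulVec_mulVec, ← mulVec_mulVec, dotProduct_mulVec, star_mulVec,
    conjTranspose_conjTranspose]

lemma star_dotProduct_conjTranspose_mulVec (Δ : Matrix κ μ ℂ) (u : κ → ℂ) (v : μ → ℂ) :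
    star v ⬝ᵥ (Δᴴ *ᵥ u) = star (star u ⬝ᵥ (Δ *ᵥ v)) := by
  rw [star_dotProduct, star_mulVec, conjTranspose_conjTranspose, ← dotProduct_mulVec]

lemma star_dotProduct_self_eq_norm_sq (u : κ → ℂ) :
    star u ⬝ᵥ u = ((‖WithLp.toLp 2 u‖ ^ 2 : ℝ) : ℂ) := by
  rw [dotProduct_comm, ← EuclideanSpace.inner_toLp_toLp, inner_self_eq_norm_sq_to_K]
  push_cast
  rfl

variable [DecidableEq κ] [DecidableEq μ]

lemma norm_star_dotProduct_mulVec_le (Δ : Matrix κ μ ℂ) (u : κ → ℂ) (v : μ → ℂ) :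
    ‖star u ⬝ᵥ (Δ *ᵥ v)‖ ≤ spNorm Δ * ‖WithLp.toLp 2 u‖ * ‖WithLp.toLp 2 v‖ := by
  have hΔv : ‖WithLp.toLp 2 (Δ *ᵥ v)‖ ≤ spNorm Δ * ‖WithLp.toLp 2 v‖ :=
    (toEuclideanLin Δ).toContinuousLinearMap.le_opNorm (WithLp.toLp 2 v)
  calc ‖star u ⬝ᵥ (Δ *ᵥ v)‖ = ‖(inner ℂ (WithLp.toLp 2 u) (WithLp.toLp 2 (Δ *ᵥ v)) : ℂ)‖ := by
        rw [EuclideanSpace.inner_toLp_toLp, dotProduct_comm]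
    _ ≤ ‖WithLp.toLp 2 u‖ * ‖WithLp.toLp 2 (Δ *ᵥ v)‖ := norm_inner_le_norm _ _
    _ ≤ ‖WithLp.toLp 2 u‖ * (spNorm Δ * ‖WithLp.toLp 2 v‖) := by gcongr
    _ = spNorm Δ * ‖WithLp.toLp 2 u‖ * ‖WithLp.toLp 2 v‖ := by ring

lemma quadratic_form_pos_of_spNorm_lt (Δ : Matrix κ μ ℂ) {ξ : ℝ} (hΔ : spNorm Δ < ξ)
    (u : κ → ℂ) (v : μ → ℂ) (huv : u ≠ 0 ∨ v ≠ 0) :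
    0 < ξ * (‖WithLp.toLp 2 u‖ ^ 2 + ‖WithLp.toLp 2 v‖ ^ 2)
      + 2 * (star u ⬝ᵥ (Δ *ᵥ v)).re := by
  set a := ‖WithLp.toLp 2 u‖
  set p := ‖WithLp.toLp 2 v‖
  have hN : 0 ≤ spNorm Δ := norm_nonneg _
  have hre : -(spNorm Δ * a * p) ≤ (star u ⬝ᵥ (Δ *ᵥ v)).re :=
    neg_le_of_abs_le ((Complex.abs_re_le_norm _).trans (norm_star_dotProduct_mulVec_le Δ u v))
  have hap : 0 < a ^ 2 + p ^ 2 := by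
    rcases huv with hu | hv
    · have : 0 < a := norm_pos_iff.2 (by simpa using hu)
      positivity
    · have : 0 < p := norm_pos_iff.2 (by simpa using hv)
      positivity
  nlinarith [mul_pos (sub_pos.2 hΔ) hap, mul_nonneg hN (sq_nonneg (a - p))]

theorem posDef_smul_add_perturbation (E : Matrix ι κ ℂ) (F : Matrix ι μ ℂ)
    (hEF : ∀ x, Eᴴ *ᵥ x = 0 → Fᴴ *ᵥ x = 0 → x = 0) (Δ : Matrix κ μ ℂ) {ξ : ℝ}
    (hΔ : spNorm Δ < ξ) :
    (ξ • (E * Eᴴ + F * Fᴴ) + E * Δ * Fᴴ + F * Δᴴ * Eᴴ).PosDef := by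
  refine PosDef.of_dotProduct_mulVec_pos ?_ fun x hx => ?_
  · simp only [IsHermitian, conjTranspose_add, conjTranspose_smul, conjTranspose_mul,
      conjTranspose_conjTranspose, star_trivial, Matrix.mul_assoc]
    abel
  · set u := Eᴴ *ᵥ x
    set v := Fᴴ *ᵥ x
    have hform : star x ⬝ᵥ ((ξ • (E * Eᴴ + F * Fᴴ) + E * Δ * Fᴴ + F * Δᴴ * Eᴴ) *ᵥ x)
        = ((ξ * (‖WithLp.toLp 2 u‖ ^ 2 + ‖WithLp.toLp 2 v‖ ^ 2)
            + 2 * (star u ⬝ᵥ (Δ *ᵥ v)).re : ℝ) : ℂ) := by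
      rw [add_mulVec, add_mulVec, smul_mulVec, add_mulVec, dotProduct_add, dotProduct_add,
        dotProduct_smul, dotProduct_add, star_dotProduct_mul_conjTranspose_mulVec,
        star_dotProduct_mul_conjTranspose_mulVec,
        star_dotProduct_mul_mul_conjTranspose_mulVec, star_dotProduct_mul_mul_conjTranspose_mulVec,
        star_dotProduct_conjTranspose_mulVec Δ u v, star_dotProduct_self_eq_norm_sq,
        star_dotProduct_self_eq_norm_sq, Complex.real_smul, add_assoc (_ * _),
        Complex.star_def, Complex.add_conj]
      push_cast
      ring
    rw [hform, Complex.zero_lt_real]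
    refine quadratic_form_pos_of_spNorm_lt Δ hΔ u v ?_
    by_contra! h
    exact hx (hEF x h.1 h.2)

end PerturbedQuadraticForm

section Realization

variable {n m : ℕ}

lemma diagXX2_one_eq :
    diagXX2 m (1 : Matrix (Fin n) (Fin n) ℂ)
      = Emat1 n m * (Emat1 n m)ᴴ + Emat2 n m * (Emat2 n m)ᴴ := by
  ext (i | i | i) (j | j | j) <;>
    simp [diagXX2, Emat1, Emat2, mul_apply, fromBlocks, fromRows_apply_inl, fromRows_apply_inr,
      one_apply, Fintype.sum_sum_type, ite_add_ite, one_add_one_eq_two]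

lemma conjTranspose_Emat1_mulVec (x : Fin n ⊕ (Fin n ⊕ Fin m) → ℂ) :
    (Emat1 n m)ᴴ *ᵥ x = Sum.elim (x ∘ Sum.inl) (x ∘ Sum.inr ∘ Sum.inr) := by
  ext (i | k) <;> simp [Emat1, mulVec, dotProduct, Fintype.sum_sum_type,
    fromBlocks, fromRows_apply_inl, fromRows_apply_inr, one_apply]

lemma conjTranspose_Emat2_mulVec (x : Fin n ⊕ (Fin n ⊕ Fin m) → ℂ) :
    (Emat2 n m)ᴴ *ᵥ x = Sum.elim (x ∘ Sum.inr ∘ Sum.inl) (x ∘ Sum.inr ∘ Sum.inr) := by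
  ext (i | k) <;> simp [Emat2, mulVec, dotProduct, Fintype.sum_sum_type,
    fromBlocks, fromRows_apply_inl, fromRows_apply_inr, one_apply]

lemma eq_zero_of_conjTranspose_Emat_mulVec_eq_zero (x : Fin n ⊕ (Fin n ⊕ Fin m) → ℂ)
    (h₁ : (Emat1 n m)ᴴ *ᵥ x = 0) (h₂ : (Emat2 n m)ᴴ *ᵥ x = 0) : x = 0 := by
  rw [conjTranspose_Emat1_mulVec] at h₁
  rw [conjTranspose_Emat2_mulVec] at h₂
  ext (i | i | k)
  · exact congrFun h₁ (Sum.inl i)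
  · exact congrFun h₂ (Sum.inl i)
  · exact congrFun h₁ (Sum.inr k)

noncomputable def stateTransform (m : ℕ) (T : Matrix (Fin n) (Fin n) ℂ) :
    Matrix (Fin n ⊕ (Fin n ⊕ Fin m)) (Fin n ⊕ (Fin n ⊕ Fin m)) ℂ :=
  fromBlocks T⁻¹ 0 0 (fromBlocks T⁻¹ 0 0 1)

lemma conjTranspose_stateTransform_mul_mul (T A : Matrix (Fin n) (Fin n) ℂ)
    (B : Matrix (Fin n) (Fin m) ℂ) (C : Matrix (Fin m) (Fin n) ℂ) (D : Matrix (Fin m) (Fin m) ℂ)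
    (hT : IsUnit T) (ξ : ℝ) :
    (stateTransform m T)ᴴ * (Wtil (Tᴴ * T) A B C D - ξ • diagXX2 m (Tᴴ * T)) * stateTransform m T
      = Wtil 1 (T * A * T⁻¹) (T * B) (C * T⁻¹) D - ξ • diagXX2 m 1 := by
  have hd : IsUnit T.det := (isUnit_iff_isUnit_det T).mp hT
  have hdH : IsUnit Tᴴ.det := by rwa [det_conjTranspose, isUnit_star]
  simp [stateTransform, Wtil, diagXX2, Matrix.mul_sub, Matrix.sub_mul, fromBlocks_conjTranspose,
    fromBlocks_multiply, fromBlocks_mul_fromRows, fromCols_mul_fromBlocks, mul_fromCols,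
    fromRows_mul, conjTranspose_nonsing_inv, ← Matrix.mul_assoc,
    mul_nonsing_inv_cancel_right T _ hd, mul_nonsing_inv T hd, nonsing_inv_mul Tᴴ hdH]

end Realization

theorem stmt15_general {n m : ℕ} (A : Matrix (Fin n) (Fin n) ℂ) (B : Matrix (Fin n) (Fin m) ℂ)
    (C : Matrix (Fin m) (Fin n) ℂ) (D : Matrix (Fin m) (Fin m) ℂ)
    (T : Matrix (Fin n) (Fin n) ℂ) (hT : IsUnit T)
    (X : Matrix (Fin n) (Fin n) ℂ) (hX : X = Tᴴ * T)
    (ξ : ℝ)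
    (hLMI : (Wtil X A B C D - ξ • diagXX2 m X).PosSemidef) :
    ∀ Δ : Matrix (Fin n ⊕ Fin m) (Fin n ⊕ Fin m) ℂ,
      (Wtil 1 (T * A * T⁻¹) (T * B) (C * T⁻¹) D
        + Emat1 n m * Δ * (Emat2 n m)ᴴ + Emat2 n m * Δᴴ * (Emat1 n m)ᴴ).det = 0 →
      ξ ≤ spNorm Δ := by
  intro Δ hdet
  by_contra! hΔ
  subst hX
  have hLMI_T : (Wtil 1 (T * A * T⁻¹) (T * B) (C * T⁻¹) D - ξ • diagXX2 m 1).PosSemidef := by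
    simpa only [conjTranspose_stateTransform_mul_mul T A B C D hT] using
      hLMI.conjTranspose_mul_mul_same (stateTransform m T)
  have hG := posDef_smul_add_perturbation (Emat1 n m) (Emat2 n m)
    eq_zero_of_conjTranspose_Emat_mulVec_eq_zero Δ hΔ
  rw [← diagXX2_one_eq] at hG
  have hpert := PosDef.posSemidef_add hLMI_T hG
  rw [← add_assoc, ← add_assoc, sub_add_cancel] at hpert
  exact hpert.det_pos.ne' hdet

/-- if `X = TᴴT`, `ξ ∈ [0,1)` and `W̃(X,M) − ξ·diag(X,X,2I) ≥ 0`, then the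
`I`-passivity radius of the normalized realization `M_T = (TAT⁻¹, TB, CT⁻¹, D)` is at
least `ξ`: every `Δ` making `Ŵ(I, M_T) + E₁ΔE₂ᴴ + E₂ΔᴴE₁ᴴ` singular has `‖Δ‖₂ ≥ ξ`
(note `Ŵ(I, M_T) = W̃(I, M_T)`). -/
theorem stmt15 {n m : ℕ} (A : Matrix (Fin n) (Fin n) ℂ) (B : Matrix (Fin n) (Fin m) ℂ)
    (C : Matrix (Fin m) (Fin n) ℂ) (D : Matrix (Fin m) (Fin m) ℂ)
    (T : Matrix (Fin n) (Fin n) ℂ) (hT : IsUnit T)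
    (X : Matrix (Fin n) (Fin n) ℂ) (hX : X = Tᴴ * T)
    (ξ : ℝ) (hξ0 : 0 ≤ ξ) (hξ1 : ξ < 1)
    (hLMI : (Wtil X A B C D - ξ • diagXX2 m X).PosSemidef) :
    ∀ Δ : Matrix (Fin n ⊕ Fin m) (Fin n ⊕ Fin m) ℂ,
      (Wtil 1 (T * A * T⁻¹) (T * B) (C * T⁻¹) D
        + Emat1 n m * Δ * (Emat2 n m)ᴴ + Emat2 n m * Δᴴ * (Emat1 n m)ᴴ).det = 0 →
      ξ ≤ spNorm Δ :=
  stmt15_general A B C D T hT X hX ξ hLMI
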